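/- Let k ≥ 3, m ≥ 0 and n ≥ k−1 be integers. Then #{Δ ∈ P_k(m,n) : d_1 = d_{k−1} ≥ 2 and 1 ≤ α_1 < d_1} = #{Δ ∈ P_k(m,n+1) : d_1 = d_{k−1} ≥ 2, α_1 > α_2, and α_1 ≥ 2}. -/

import Mathlib

/-- A partition: a finite nonincreasing list of positive integers. -/
structure Partn where
  parts : List ℕ
  sorted : parts.Pairwise (· ≥ ·)
  pos : ∀ x ∈ parts, 0 < x

namespace Partn

/-- The weight `|λ|` of a partition: the sum of its parts. -/
def wt (p : Partn) : ℕ := p.parts.sum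

/-- The length `ℓ(λ)`: the number of parts. -/
def len (p : Partn) : ℕ := p.parts.length

/-- The `j`-th largest part `λ_j` (1-indexed), with `λ_j = 0` for `j > ℓ(λ)`. -/
def part (p : Partn) (j : ℕ) : ℕ := p.parts.getD (j - 1) 0

/-- `f_j(λ)`: the number of parts of `λ` equal to `j`. -/
def freq (p : Partn) (j : ℕ) : ℕ := p.parts.count j

/-- The empty partition. -/
def empty : Partn := ⟨[], List.Pairwise.nil, by simp⟩

end Partn

/-- The type of `(2k-1)`-tuples `(α, β, γ^1, …, γ^{k-2}, ϖ^1, …, ϖ^{k-1})`. -/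
abbrev PTuple (k : ℕ) : Type :=
  Partn × Partn × (Fin (k - 2) → Partn) × (Fin (k - 1) → Partn)

/-- `d_j := ℓ(ϖ^j)` (1-indexed, `0` out of range). -/
def dIdx (k : ℕ) (w : Fin (k - 1) → Partn) (j : ℕ) : ℕ :=
  if h : j - 1 < k - 1 then (w ⟨j - 1, h⟩).len else 0

/-- `γ^j` (1-indexed, the empty partition out of range). -/
def gIdx (k : ℕ) (g : Fin (k - 2) → Partn) (j : ℕ) : Partn :=
  if h : j - 1 < k - 2 then g ⟨j - 1, h⟩ else Partn.empty

/-- Membership in Garvan-type set `P_k(m, n)` of `(2k-1)`-tuples of partitions. -/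
def PkMem (k : ℕ) (m : ℤ) (n : ℕ) (t : PTuple k) : Prop :=
  (∀ i : Fin (k - 1), (t.2.2.2 i).parts =
      List.replicate (t.2.2.2 i).len (t.2.2.2 i).len) ∧
  (∀ j, 1 ≤ j → j + 1 ≤ k - 1 → dIdx k t.2.2.2 (j + 1) ≤ dIdx k t.2.2.2 j) ∧
  1 ≤ dIdx k t.2.2.2 (k - 1) ∧
  (∀ x ∈ t.1.parts, x ≤ dIdx k t.2.2.2 (k - 1)) ∧
  (∀ x ∈ t.2.1.parts, x ≤ dIdx k t.2.2.2 (k - 1)) ∧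
  (t.1.len : ℤ) - (t.2.1.len : ℤ) = m ∧
  (∀ j, 1 ≤ j → j ≤ k - 2 →
      (gIdx k t.2.2.1 j).len ≤ dIdx k t.2.2.2 j - dIdx k t.2.2.2 (j + 1)) ∧
  t.1.wt + t.2.1.wt + (∑ i, (t.2.2.1 i).wt) + (∑ i, (t.2.2.2 i).wt) = n

/-! Adding one to the largest part of `α` is a bijection between the two sets. Since
`d_1 = d_{k-1}`, the condition `α_1 < d_1` is exactly what keeps the new largest part within the
bound `d_{k-1}`, and the weight goes up by one. Conversely, a largest part `α_1 ≥ 2` with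
`α_2 < α_1` can be lowered by one without breaking the partition. -/

lemma le_getD_zero_of_pairwise_ge {l : List ℕ} (hl : l.Pairwise (· ≥ ·)) {x : ℕ} (hx : x ∈ l) :
    x ≤ l.getD 0 0 := by
  cases l with
  | nil => simp at hx
  | cons a r =>
    rcases List.mem_cons.1 hx with rfl | hx
    · simp
    · exact (List.pairwise_cons.1 hl).1 x hx

namespace Partn

@[ext]
lemma ext {p q : Partn} (h : p.parts = q.parts) : p = q := by
  cases p; cases q; simpa using h

lemma le_part_one (p : Partn) {x : ℕ} (hx : x ∈ p.parts) : x ≤ p.part 1 :=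
  le_getD_zero_of_pairwise_ge p.sorted hx

lemma forall_le_iff_part_one_le (p : Partn) (d : ℕ) :
    (∀ x ∈ p.parts, x ≤ d) ↔ p.part 1 ≤ d := by
  refine ⟨fun h => ?_, fun h x hx => (p.le_part_one hx).trans h⟩
  cases hl : p.parts with
  | nil => simp [part, hl]
  | cons a r => simpa [part, hl] using h a (hl ▸ List.mem_cons_self)

lemma part_two_le_part_one (p : Partn) : p.part 2 ≤ p.part 1 := by
  have hs := p.sorted
  cases hl : p.parts with
  | nil => simp [part, hl]
  | cons a r =>
    rw [hl, List.pairwise_cons] at hs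
    cases r with
    | nil => simp [part, hl]
    | cons b r => simpa [part, hl] using hs.1 b List.mem_cons_self

lemma parts_ne_nil_iff (p : Partn) : p.parts ≠ [] ↔ 0 < p.part 1 := by
  cases hl : p.parts with
  | nil => simp [part, hl]
  | cons a r => simpa [part, hl] using p.pos a (hl ▸ List.mem_cons_self)

def bump (p : Partn) : Partn where
  parts := p.parts.modifyHead (· + 1)
  sorted := by
    obtain ⟨_ | ⟨a, r⟩, hs, -⟩ := p
    · exact List.Pairwise.nil
    · simp only [List.modifyHead_cons, List.pairwise_cons] at hs ⊢
      exact ⟨fun b hb => (hs.1 b hb).trans (Nat.le_succ a), hs.2⟩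
  pos := by
    obtain ⟨_ | ⟨a, r⟩, -, hpos⟩ := p
    · simp
    · simp only [List.modifyHead_cons, List.mem_cons, forall_eq_or_imp] at hpos ⊢
      exact ⟨Nat.succ_pos a, hpos.2⟩

lemma bump_injective : Function.Injective bump := by
  intro p q h
  rw [Partn.ext_iff] at h ⊢
  cases hp : p.parts <;> cases hq : q.parts <;> simp_all [bump]

lemma len_bump (p : Partn) : p.bump.len = p.len := by
  simp [bump, len]

lemma wt_bump {p : Partn} (hp : p.parts ≠ []) : p.bump.wt = p.wt + 1 := by
  obtain ⟨a, r, hl⟩ := List.exists_cons_of_ne_nil hp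
  simp [bump, wt, hl, add_right_comm]

lemma part_one_bump {p : Partn} (hp : p.parts ≠ []) : p.bump.part 1 = p.part 1 + 1 := by
  obtain ⟨a, r, hl⟩ := List.exists_cons_of_ne_nil hp
  simp [bump, part, hl]

lemma part_two_bump (p : Partn) : p.bump.part 2 = p.part 2 := by
  cases hl : p.parts <;> simp [bump, part, hl]

lemma exists_bump_eq {p : Partn} (h21 : p.part 2 < p.part 1) (h1 : 2 ≤ p.part 1) :
    ∃ q : Partn, q.parts ≠ [] ∧ q.bump = p := by
  have hs := p.sorted
  have hpos := p.pos
  cases hl : p.parts with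
  | nil => simp [part, hl] at h1
  | cons a r =>
    simp only [part, hl, List.getD_cons_zero, Nat.add_one_sub_one, List.getD_cons_succ] at h21 h1
    rw [hl, List.pairwise_cons] at hs
    refine ⟨⟨(a - 1) :: r, List.pairwise_cons.2 ⟨fun b hb => ?_, hs.2⟩, ?_⟩, List.cons_ne_nil _ _, ?_⟩
    · have := le_getD_zero_of_pairwise_ge hs.2 hb
      omega
    · simp only [hl, List.mem_cons, forall_eq_or_imp] at hpos ⊢
      exact ⟨by omega, hpos.2⟩
    · ext1
      simp only [bump, hl, List.modifyHead_cons]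
      congr 1
      omega

end Partn

lemma pkMem_bump_iff {k : ℕ} {m : ℤ} {n : ℕ} {t : PTuple k} (ht : t.1.parts ≠ []) :
    PkMem k m (n + 1) (t.1.bump, t.2) ↔ PkMem k m n t ∧ t.1.part 1 < dIdx k t.2.2.2 (k - 1) := by
  simp only [PkMem, Partn.forall_le_iff_part_one_le, Partn.len_bump, Partn.wt_bump ht,
    Partn.part_one_bump ht]
  constructor
  · rintro ⟨h1, h2, h3, h4, h5, h6, h7, h8⟩
    exact ⟨⟨h1, h2, h3, by omega, h5, h6, h7, by omega⟩, by omega⟩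
  · rintro ⟨⟨h1, h2, h3, -, h5, h6, h7, h8⟩, hlt⟩
    exact ⟨h1, h2, h3, hlt, h5, h6, h7, by omega⟩

theorem lem_pp5_general (k : ℕ) (m : ℤ) (n : ℕ) :
    {t : PTuple k | PkMem k m n t ∧
        dIdx k t.2.2.2 1 = dIdx k t.2.2.2 (k - 1) ∧ 2 ≤ dIdx k t.2.2.2 1 ∧
        1 ≤ t.1.part 1 ∧ t.1.part 1 < dIdx k t.2.2.2 1}.ncard =
      {t : PTuple k | PkMem k m (n + 1) t ∧
        dIdx k t.2.2.2 1 = dIdx k t.2.2.2 (k - 1) ∧ 2 ≤ dIdx k t.2.2.2 1 ∧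
        t.1.part 2 < t.1.part 1 ∧ 2 ≤ t.1.part 1}.ncard := by
  rw [← Set.ncard_image_of_injective _ (Partn.bump_injective.prodMap Function.injective_id)]
  congr 1
  ext t
  constructor
  · rintro ⟨s, ⟨hs, hd, hd2, h1, hlt⟩, rfl⟩
    have hne : s.1.parts ≠ [] := s.1.parts_ne_nil_iff.2 h1
    refine ⟨(pkMem_bump_iff hne).2 ⟨hs, hd ▸ hlt⟩, hd, hd2, ?_, ?_⟩
    · simp only [Prod.map_fst, Partn.part_two_bump, Partn.part_one_bump hne]
      exact Nat.lt_succ_of_le s.1.part_two_le_part_one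
    · simp only [Prod.map_fst, Partn.part_one_bump hne]
      omega
  · rintro ⟨ht, hd, hd2, h21, h1⟩
    obtain ⟨q, hne, hq⟩ := Partn.exists_bump_eq h21 h1
    have hmem := (pkMem_bump_iff (t := (q, t.2)) (n := n) hne).1 (by rwa [hq])
    exact ⟨(q, t.2), ⟨hmem.1, hd, hd2, q.parts_ne_nil_iff.1 hne, hd ▸ hmem.2⟩, by simp [hq]⟩

/-- Lemma 5.8 (restated). -/
theorem lem_pp5 (k : ℕ) (m : ℤ) (n : ℕ) (hk : 3 ≤ k) (hm : 0 ≤ m)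
    (hn : k - 1 ≤ n) :
    {t : PTuple k | PkMem k m n t ∧
        dIdx k t.2.2.2 1 = dIdx k t.2.2.2 (k - 1) ∧ 2 ≤ dIdx k t.2.2.2 1 ∧
        1 ≤ t.1.part 1 ∧ t.1.part 1 < dIdx k t.2.2.2 1}.ncard =
      {t : PTuple k | PkMem k m (n + 1) t ∧
        dIdx k t.2.2.2 1 = dIdx k t.2.2.2 (k - 1) ∧ 2 ≤ dIdx k t.2.2.2 1 ∧
        t.1.part 2 < t.1.part 1 ∧ 2 ≤ t.1.part 1}.ncard :=
  lem_pp5_general k m n
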